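/- Combining the variance bound with averaging and the singular-value bound: if u₁,…,u_m are i.i.d. unit vectors in R^K with E[uᵣuᵣᵀ] = (1/K)I, g = Θᵀ v for Θ ∈ R^{P×K} and v ∈ R^P, and ḡ = (1/m)Σᵣ(gᵀuᵣ)uᵣ, then E[‖ḡ − E[ḡ]‖²] ≤ ((K−1)/(mK))·σ_max(Θ)²·‖v‖². -/

import Mathlib

open MeasureTheory ProbabilityTheory RealInnerProductSpace

/-! The terms `X r = ⟪g, u r⟫ • u r` are independent, so, coordinate by coordinate, the variance
of their average is `1 / m²` times the sum of their variances. For one term, isotropy gives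
`E X = g / K` and, as `‖u‖ = 1`, `E ‖X‖² = E ⟪g, u⟫² = ‖g‖² / K`; hence its variance is
`(K - 1) ‖g‖² / K²`. Finally `g = Θᵀ v` and the adjoint has the operator norm of `Θ`, so
`‖g‖ ≤ σ_max(Θ) ‖v‖`. -/

section Variance

variable {Ω : Type*} [MeasurableSpace Ω] {μ : Measure Ω}

theorem integral_norm_smul_sub_integral_sq {E : Type*} [NormedAddCommGroup E] [NormedSpace ℝ E]
    (c : ℝ) (Y : Ω → E) :
    ∫ ω, ‖c • Y ω - ∫ ω', c • Y ω' ∂μ‖ ^ 2 ∂μ = c ^ 2 * ∫ ω, ‖Y ω - ∫ ω', Y ω' ∂μ‖ ^ 2 ∂μ := by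
  simp_rw [integral_smul, ← smul_sub, norm_smul, mul_pow, Real.norm_eq_abs, sq_abs]
  exact integral_const_mul _ _

theorem integral_norm_sub_integral_sq [IsProbabilityMeasure μ] {E : Type*} [NormedAddCommGroup E]
    [InnerProductSpace ℝ E] [CompleteSpace E] {Y : Ω → E} (hY : MemLp Y 2 μ) :
    ∫ ω, ‖Y ω - ∫ ω', Y ω' ∂μ‖ ^ 2 ∂μ = ∫ ω, ‖Y ω‖ ^ 2 ∂μ - ‖∫ ω, Y ω ∂μ‖ ^ 2 := by
  set m := ∫ ω, Y ω ∂μ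
  have hY1 : Integrable Y μ := hY.integrable one_le_two
  have hY2 : Integrable (fun ω ↦ ‖Y ω‖ ^ 2) μ := hY.norm.integrable_sq
  have hinner : Integrable (fun ω ↦ 2 * ⟪m, Y ω⟫) μ := (hY1.const_inner m).const_mul 2
  have hdiff : Integrable (fun ω ↦ ‖Y ω‖ ^ 2 - 2 * ⟪m, Y ω⟫) μ := hY2.sub hinner
  simp_rw [norm_sub_sq_real, real_inner_comm m]
  rw [integral_add hdiff (integrable_const _), integral_sub hY2 hinner,
    integral_const_mul, integral_inner hY1, real_inner_self_eq_norm_sq]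
  simp only [integral_const, probReal_univ, one_smul]
  ring

theorem EuclideanSpace.integral_apply {ι : Type*} [Fintype ι] {Y : Ω → EuclideanSpace ℝ ι}
    (hY : Integrable Y μ) (i : ι) : (∫ ω, Y ω ∂μ) i = ∫ ω, Y ω i ∂μ :=
  ((EuclideanSpace.proj i).integral_comp_comm hY).symm

theorem EuclideanSpace.integral_norm_sub_integral_sq_eq_sum_variance [IsProbabilityMeasure μ]
    {ι : Type*} [Fintype ι] {Y : Ω → EuclideanSpace ℝ ι} (hY : MemLp Y 2 μ) :
    ∫ ω, ‖Y ω - ∫ ω', Y ω' ∂μ‖ ^ 2 ∂μ = ∑ i, Var[fun ω ↦ Y ω i; μ] := by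
  have hYi : ∀ i, MemLp (fun ω ↦ Y ω i) 2 μ :=
    fun i ↦ (EuclideanSpace.proj (𝕜 := ℝ) i).comp_memLp' hY
  simp_rw [EuclideanSpace.real_norm_sq_eq, PiLp.sub_apply,
    EuclideanSpace.integral_apply (hY.integrable one_le_two)]
  have hcentred : ∀ i, Integrable (fun ω ↦ (Y ω i - ∫ ω', Y ω' i ∂μ) ^ 2) μ :=
    fun i ↦ ((hYi i).sub (memLp_const _)).integrable_sq
  rw [integral_finsetSum _ fun i _ ↦ hcentred i]
  exact Finset.sum_congr rfl fun i _ ↦ (variance_eq_integral (hYi i).aemeasurable).symm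

theorem EuclideanSpace.integral_norm_sum_sub_integral_sq [IsProbabilityMeasure μ]
    {ι κ : Type*} [Fintype ι] {X : κ → Ω → EuclideanSpace ℝ ι} (s : Finset κ)
    (hX : ∀ r ∈ s, MemLp (X r) 2 μ) (hindep : Set.Pairwise s fun r t ↦ X r ⟂ᵢ[μ] X t) :
    ∫ ω, ‖∑ r ∈ s, X r ω - ∫ ω', ∑ r ∈ s, X r ω' ∂μ‖ ^ 2 ∂μ
      = ∑ r ∈ s, ∫ ω, ‖X r ω - ∫ ω', X r ω' ∂μ‖ ^ 2 ∂μ := by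
  have hcoord : ∀ i, ∀ r ∈ s, MemLp (fun ω ↦ X r ω i) 2 μ :=
    fun i r hr ↦ (EuclideanSpace.proj (𝕜 := ℝ) i).comp_memLp' (hX r hr)
  have hindep_coord : ∀ i, Set.Pairwise s fun r t ↦ (fun ω ↦ X r ω i) ⟂ᵢ[μ] fun ω ↦ X t ω i := by
    intro i
    have hproj : Measurable fun x : EuclideanSpace ℝ ι ↦ x i := by fun_prop
    exact fun r hr t ht hrt ↦ (hindep hr ht hrt).comp hproj hproj
  have hsum : MemLp (fun ω ↦ ∑ r ∈ s, X r ω) 2 μ := memLp_finsetSum s hX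
  rw [integral_norm_sub_integral_sq_eq_sum_variance hsum,
    Finset.sum_congr rfl fun r hr ↦ integral_norm_sub_integral_sq_eq_sum_variance (hX r hr),
    Finset.sum_comm]
  refine Finset.sum_congr rfl fun i _ ↦ ?_
  rw [← IndepFun.variance_sum (hcoord i) (hindep_coord i)]
  congr 1
  ext ω
  simp

end Variance

section Isotropic

variable {Ω : Type*} [MeasurableSpace Ω] {μ : Measure Ω} {ι : Type*} [Fintype ι]
  {u : Ω → EuclideanSpace ℝ ι} {c : ℝ}

theorem memLp_inner_smul_of_norm_eq_one [IsFiniteMeasure μ] (hmeas : AEStronglyMeasurable u μ)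
    (hunit : ∀ᵐ ω ∂μ, ‖u ω‖ = 1) (g : EuclideanSpace ℝ ι) :
    MemLp (fun ω ↦ ⟪g, u ω⟫ • u ω) 2 μ := by
  refine MemLp.of_bound ((hmeas.const_inner (𝕜 := ℝ) (c := g)).smul hmeas) ‖g‖ ?_
  filter_upwards [hunit] with ω hω
  calc ‖⟪g, u ω⟫ • u ω‖ = |⟪g, u ω⟫| := by rw [norm_smul, hω, mul_one, Real.norm_eq_abs]
    _ ≤ ‖g‖ := by simpa [hω] using abs_real_inner_le_norm g (u ω)

variable [DecidableEq ι]

theorem integral_inner_mul_inner_of_isotropic (hu : MemLp u 2 μ)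
    (hiso : ∀ i j, ∫ ω, u ω i * u ω j ∂μ = if i = j then c else 0) (a b : EuclideanSpace ℝ ι) :
    ∫ ω, ⟪a, u ω⟫ * ⟪b, u ω⟫ ∂μ = c * ⟪a, b⟫ := by
  have hcoord : ∀ i, MemLp (fun ω ↦ u ω i) 2 μ :=
    fun i ↦ (EuclideanSpace.proj (𝕜 := ℝ) i).comp_memLp' hu
  have hprod : ∀ i j, Integrable (fun ω ↦ a i * b j * (u ω i * u ω j)) μ :=
    fun i j ↦ ((hcoord i).integrable_mul (hcoord j)).const_mul _
  have hexpand : ∀ ω, ⟪a, u ω⟫ * ⟪b, u ω⟫ = ∑ i, ∑ j, a i * b j * (u ω i * u ω j) := by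
    intro ω
    simp only [PiLp.inner_apply, RCLike.inner_apply, conj_trivial, Finset.sum_mul_sum]
    exact Finset.sum_congr rfl fun i _ ↦ Finset.sum_congr rfl fun j _ ↦ by ring
  simp_rw [hexpand]
  rw [integral_finsetSum _ fun i _ ↦ integrable_finsetSum _ fun j _ ↦ hprod i j]
  simp_rw [integral_finsetSum _ fun j _ ↦ hprod _ j, integral_const_mul, hiso]
  simp [PiLp.inner_apply, Finset.mul_sum, mul_comm]

theorem integral_inner_smul_of_isotropic (hu : MemLp u 2 μ)
    (hiso : ∀ i j, ∫ ω, u ω i * u ω j ∂μ = if i = j then c else 0) (g : EuclideanSpace ℝ ι) :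
    ∫ ω, ⟪g, u ω⟫ • u ω ∂μ = c • g := by
  have hint : Integrable (fun ω ↦ ⟪g, u ω⟫ • u ω) μ :=
    memLp_one_iff_integrable.mp (hu.smul (hu.const_inner (𝕜 := ℝ) g))
  refine ext_inner_left ℝ fun b ↦ ?_
  rw [← integral_inner hint, real_inner_smul_right]
  simp_rw [real_inner_smul_right, mul_comm _ ⟪b, _⟫]
  rw [integral_inner_mul_inner_of_isotropic hu hiso, mul_comm]

theorem integral_norm_inner_smul_sq_of_isotropic (hu : MemLp u 2 μ)
    (hunit : ∀ᵐ ω ∂μ, ‖u ω‖ = 1)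
    (hiso : ∀ i j, ∫ ω, u ω i * u ω j ∂μ = if i = j then c else 0) (g : EuclideanSpace ℝ ι) :
    ∫ ω, ‖⟪g, u ω⟫ • u ω‖ ^ 2 ∂μ = c * ‖g‖ ^ 2 := by
  have hnorm : (fun ω ↦ ‖⟪g, u ω⟫ • u ω‖ ^ 2) =ᵐ[μ] fun ω ↦ ⟪g, u ω⟫ * ⟪g, u ω⟫ := by
    filter_upwards [hunit] with ω hω
    rw [norm_smul, hω, mul_one, Real.norm_eq_abs, sq_abs, sq]
  rw [integral_congr_ae hnorm, integral_inner_mul_inner_of_isotropic hu hiso,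
    real_inner_self_eq_norm_sq]

theorem integral_norm_inner_smul_sub_integral_sq_of_isotropic [IsProbabilityMeasure μ]
    (hmeas : AEStronglyMeasurable u μ) (hunit : ∀ᵐ ω ∂μ, ‖u ω‖ = 1)
    (hiso : ∀ i j, ∫ ω, u ω i * u ω j ∂μ = if i = j then c else 0) (g : EuclideanSpace ℝ ι) :
    ∫ ω, ‖⟪g, u ω⟫ • u ω - ∫ ω', ⟪g, u ω'⟫ • u ω' ∂μ‖ ^ 2 ∂μ = (c - c ^ 2) * ‖g‖ ^ 2 := by
  have hu : MemLp u 2 μ := MemLp.of_bound hmeas 1 (hunit.mono fun _ h ↦ h.le)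
  rw [integral_norm_sub_integral_sq (memLp_inner_smul_of_norm_eq_one hmeas hunit g),
    integral_norm_inner_smul_sq_of_isotropic hu hunit hiso,
    integral_inner_smul_of_isotropic hu hiso,
    norm_smul, Real.norm_eq_abs, mul_pow, sq_abs]
  ring

end Isotropic

theorem natCast_inv_sq_mul_mul_inv_sub_inv_sq_le (m K : ℕ) {x y : ℝ} (hx : 0 ≤ x) (hxy : x ≤ y) :
    ((m : ℝ)⁻¹) ^ 2 * (m * (((K : ℝ)⁻¹ - (K : ℝ)⁻¹ ^ 2) * x)) ≤ (K - 1) / (m * K) * y := by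
  rcases Nat.eq_zero_or_pos m with rfl | hm
  · simp
  rcases Nat.eq_zero_or_pos K with rfl | hK
  · simp
  have hK' : (1 : ℝ) ≤ K := by exact_mod_cast hK
  calc ((m : ℝ)⁻¹) ^ 2 * (m * (((K : ℝ)⁻¹ - (K : ℝ)⁻¹ ^ 2) * x)) = (K - 1) / (m * K) * (x / K) := by
        field_simp
    _ ≤ (K - 1) / (m * K) * y := by
        gcongr
        exact (div_le_self hx hK').trans hxy

theorem Matrix.norm_toEuclideanLin_transpose_apply_le {m n : Type*} [Fintype m] [DecidableEq m]
    [Fintype n] [DecidableEq n] (A : Matrix m n ℝ) (v : EuclideanSpace ℝ m) :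
    ‖Matrix.toEuclideanLin A.transpose v‖
      ≤ ‖LinearMap.toContinuousLinearMap (Matrix.toEuclideanLin A)‖ * ‖v‖ := by
  rw [← Matrix.conjTranspose_eq_transpose_of_trivial,
    Matrix.toEuclideanLin_conjTranspose_eq_adjoint, ← ContinuousLinearMap.adjoint.norm_map]
  exact (LinearMap.toContinuousLinearMap (Matrix.toEuclideanLin A)).adjoint.le_opNorm v

theorem spsa_variance_main_bound_general {K P m : ℕ} {Ω : Type*}
    [MeasurableSpace Ω] (μ : Measure Ω) [IsProbabilityMeasure μ]
    (u : Fin m → Ω → EuclideanSpace ℝ (Fin K))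
    (hmeas : ∀ r, Measurable (u r))
    (hindep : iIndepFun u μ)
    (hunit : ∀ r, ∀ᵐ ω ∂μ, ‖u r ω‖ = 1)
    (hiso : ∀ r (i j : Fin K), ∫ ω, u r ω i * u r ω j ∂μ = if i = j then (K : ℝ)⁻¹ else 0)
    (Θ : Matrix (Fin P) (Fin K) ℝ) (v : EuclideanSpace ℝ (Fin P))
    (g : EuclideanSpace ℝ (Fin K)) (hg : g = Matrix.toEuclideanLin Θ.transpose v) :
    ∫ ω, ‖(m : ℝ)⁻¹ • (∑ r, ⟪g, u r ω⟫ • u r ω) -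
        ∫ ω', (m : ℝ)⁻¹ • (∑ r, ⟪g, u r ω'⟫ • u r ω') ∂μ‖ ^ 2 ∂μ
      ≤ ((K - 1 : ℝ) / (m * K)) *
          ‖LinearMap.toContinuousLinearMap (Matrix.toEuclideanLin Θ)‖ ^ 2 * ‖v‖ ^ 2 := by
  set X : Fin m → Ω → EuclideanSpace ℝ (Fin K) := fun r ω ↦ ⟪g, u r ω⟫ • u r ω
  have hX : ∀ r ∈ Finset.univ, MemLp (X r) 2 μ := fun r _ ↦
    memLp_inner_smul_of_norm_eq_one (hmeas r).aestronglyMeasurable (hunit r) g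
  have hφ : Measurable fun x : EuclideanSpace ℝ (Fin K) ↦ ⟪g, x⟫ • x := by fun_prop
  have hvar : ∀ r, ∫ ω, ‖X r ω - ∫ ω', X r ω' ∂μ‖ ^ 2 ∂μ = ((K : ℝ)⁻¹ - (K : ℝ)⁻¹ ^ 2) * ‖g‖ ^ 2 :=
    fun r ↦ integral_norm_inner_smul_sub_integral_sq_of_isotropic (hmeas r).aestronglyMeasurable
      (hunit r) (hiso r) g
  have hgle : ‖g‖ ≤ _ * ‖v‖ := hg ▸ Θ.norm_toEuclideanLin_transpose_apply_le v
  rw [integral_norm_smul_sub_integral_sq, EuclideanSpace.integral_norm_sum_sub_integral_sq _ hX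
    fun r _ t _ hrt ↦ (hindep.indepFun hrt).comp hφ hφ]
  simp only [hvar, Finset.sum_const, Finset.card_univ, Fintype.card_fin, nsmul_eq_mul]
  rw [mul_assoc]
  refine natCast_inv_sq_mul_mul_inv_sub_inv_sq_le m K (sq_nonneg _) ?_
  rw [← mul_pow]
  exact pow_le_pow_left₀ (norm_nonneg g) hgle 2

/-- Main SPSA variance bound (Proposition 1, μ → 0 limit): with `g = Θᵀv` and
`ḡ = (1/m)Σᵣ(gᵀuᵣ)uᵣ` over i.i.d. isotropic unit directions `uᵣ`,
`E[‖ḡ − E[ḡ]‖²] ≤ ((K−1)/(mK))·σ_max(Θ)²·‖v‖²`. -/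
theorem spsa_variance_main_bound {K P m : ℕ} (hK : 0 < K) (hm : 0 < m) {Ω : Type*}
    [MeasurableSpace Ω] (μ : Measure Ω) [IsProbabilityMeasure μ]
    (u : Fin m → Ω → EuclideanSpace ℝ (Fin K))
    (hmeas : ∀ r, Measurable (u r))
    (hindep : iIndepFun u μ)
    (hident : ∀ r, Measure.map (u r) μ = Measure.map (u ⟨0, hm⟩) μ)
    (hunit : ∀ r, ∀ᵐ ω ∂μ, ‖u r ω‖ = 1)
    (hiso : ∀ r (i j : Fin K), ∫ ω, u r ω i * u r ω j ∂μ = if i = j then (K : ℝ)⁻¹ else 0)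
    (Θ : Matrix (Fin P) (Fin K) ℝ) (v : EuclideanSpace ℝ (Fin P))
    (g : EuclideanSpace ℝ (Fin K)) (hg : g = Matrix.toEuclideanLin Θ.transpose v) :
    ∫ ω, ‖(m : ℝ)⁻¹ • (∑ r, ⟪g, u r ω⟫ • u r ω) -
        ∫ ω', (m : ℝ)⁻¹ • (∑ r, ⟪g, u r ω'⟫ • u r ω') ∂μ‖ ^ 2 ∂μ
      ≤ ((K - 1 : ℝ) / (m * K)) *
          ‖LinearMap.toContinuousLinearMap (Matrix.toEuclideanLin Θ)‖ ^ 2 * ‖v‖ ^ 2 :=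
  spsa_variance_main_bound_general μ u hmeas hindep hunit hiso Θ v g hg
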